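/- Let Z be a uniform read-d-times non-deterministic branching program and let X ⊆ V(Z) be a set separating two disjoint subsets Y_1 and Y_2 of Vars(Z). Let Y_1' ⊆ Y_1 and Y_2' ⊆ Y_2, let S be an assignment to Vars(Z) \ (Y_1 ∪ Y_2), and let Q' and Q'' be two computational paths of Z passing through all vertices of X with S ⊆ A(Q') ∩ A(Q''), such that Q' assigns all variables of Y_1' negatively and Q'' assigns all variables of Y_2' negatively. Then there is a computational path Q* of Z passing through all vertices of X with S ⊆ A(Q*) that assigns all variables of Y_1' ∪ Y_2' negatively. -/

import Mathlib

open scoped Classical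

namespace NBPPaper

/-! ### Literals and assignments.
A literal is a pair `(x, b)` of a variable and a polarity (`true` = positive literal).
A set of literals is a `Finset (Var × Bool)`. -/

/-- A set of literals is consistent: no variable occurs both positively and negatively. -/
def Consistent {Var : Type} (S : Finset (Var × Bool)) : Prop :=
  ∀ x : Var, ¬((x, true) ∈ S ∧ (x, false) ∈ S)

/-- `S` is a set of literals over the variable set `W`. -/
def LitsOver {Var : Type} (W : Finset Var) (S : Finset (Var × Bool)) : Prop :=
  Consistent S ∧ ∀ l ∈ S, l.1 ∈ W

/-- `S` is an assignment of exactly the variables of `W`: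
it contains exactly one literal of each variable of `W` and nothing else. -/
def AssignsExactly {Var : Type} (W : Finset Var) (S : Finset (Var × Bool)) : Prop :=
  (∀ l ∈ S, l.1 ∈ W) ∧ ∀ x ∈ W, ∃! b : Bool, (x, b) ∈ S

/-- Satisfaction of a CNF, given as a set of clauses (each clause a set of literals):
every clause contains a literal of `S`. -/
def SatCNF {V : Type} (φ : Set (Finset (V × Bool))) (S : Finset (V × Bool)) : Prop :=
  ∀ C ∈ φ, ∃ l ∈ C, l ∈ S

/-! ### Nondeterministic branching programs -/

/-- An edge of a nondeterministic branching program over variable type `Var`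
with vertex set `Fin n`.  `lab = none` means the edge is unlabelled; the field
`id` allows parallel edges (multigraph). -/
structure NBPEdge (Var : Type) (n : ℕ) where
  src : Fin n
  dst : Fin n
  lab : Option (Var × Bool)
  id : ℕ
deriving DecidableEq

/-- A nondeterministic branching program: a finite DAG (the vertices `Fin n` are
listed in a topological order, i.e. every edge increases the index) with a single
source (the only vertex with no incoming edge) and a single sink (the only vertex
with no outgoing edge). -/
structure NBP (Var : Type) where
  n : ℕ
  edges : Finset (NBPEdge Var n)
  source : Fin n
  sink : Fin n
  acyc : ∀ e ∈ edges, e.src < e.dst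
  source_no_in : ∀ e ∈ edges, e.dst ≠ source
  sink_no_out : ∀ e ∈ edges, e.src ≠ sink
  only_source : ∀ v : Fin n, v ≠ source → ∃ e ∈ edges, e.dst = v
  only_sink : ∀ v : Fin n, v ≠ sink → ∃ e ∈ edges, e.src = v

variable {Var : Type}

/-- The set of literals labelling the edges of a path (a list of edges). -/
def pathLits [DecidableEq Var] {n : ℕ} (p : List (NBPEdge Var n)) : Finset (Var × Bool) :=
  (p.filterMap NBPEdge.lab).toFinset

/-- The set of variables occurring (as edge labels) on a path. -/
def pathVars [DecidableEq Var] {n : ℕ} (p : List (NBPEdge Var n)) : Finset Var :=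
  ((p.filterMap NBPEdge.lab).map Prod.fst).toFinset

/-- The set of vertices visited by a path. -/
def pathVertices {n : ℕ} (p : List (NBPEdge Var n)) : Finset (Fin n) :=
  (p.map NBPEdge.src).toFinset ∪ (p.map NBPEdge.dst).toFinset

/-- The number of occurrences of the variable `x` as an edge label on the path `p`. -/
def occCount [DecidableEq Var] {n : ℕ} (x : Var) (p : List (NBPEdge Var n)) : ℕ :=
  (p.filterMap NBPEdge.lab).countP (fun l => decide (l.1 = x))

namespace NBP

/-- `p` is a directed path of `Z` from vertex `u` to vertex `v`. -/
def IsPathFrom (Z : NBP Var) (u v : Fin Z.n) (p : List (NBPEdge Var Z.n)) : Prop :=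
  p ≠ [] ∧ (∀ e ∈ p, e ∈ Z.edges) ∧ List.Chain' (fun e f => e.dst = f.src) p ∧
    p.head?.map NBPEdge.src = some u ∧ p.getLast?.map NBPEdge.dst = some v

/-- `p` is a source-sink path of `Z`. -/
def IsSourceSink (Z : NBP Var) (p : List (NBPEdge Var Z.n)) : Prop :=
  Z.IsPathFrom Z.source Z.sink p

/-- A computational path: a source-sink path carrying no two opposite literals. -/
def IsCompPath [DecidableEq Var] (Z : NBP Var) (p : List (NBPEdge Var Z.n)) : Prop :=
  Z.IsSourceSink p ∧ Consistent (pathLits p)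

/-- The set `Vars(Z)` of variables whose literals occur on edges of `Z`. -/
def vars [DecidableEq Var] (Z : NBP Var) : Finset Var :=
  Z.edges.biUnion (fun e => (e.lab.map Prod.fst).toFinset)

/-- `Z` is a (syntactic) read-`d`-times NBP. -/
def ReadTimes [DecidableEq Var] (Z : NBP Var) (d : ℕ) : Prop :=
  ∀ p, Z.IsSourceSink p → ∀ x : Var, occCount x p ≤ d

/-- `Z` is a uniform read-`d`-times NBP: every variable of `Z` occurs exactly `d`
times on every source-sink path. -/
def UniformReadTimes [DecidableEq Var] (Z : NBP Var) (d : ℕ) : Prop :=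
  Z.ReadTimes d ∧ ∀ p, Z.IsSourceSink p → ∀ x ∈ Z.vars, occCount x p = d

/-- `Z` computes the Boolean function with variable set `W` whose satisfying
(total) assignments are described by the predicate `F`. -/
def Computes [DecidableEq Var] (Z : NBP Var) (W : Finset Var)
    (F : Finset (Var × Bool) → Prop) : Prop :=
  Z.vars = W ∧ ∀ S, AssignsExactly W S → (F S ↔ ∃ p, Z.IsCompPath p ∧ pathLits p ⊆ S)

end NBP

/-- `parts` is the partition of the path `p` generated by the vertex set `X`:
`p` is cut into `|X| + 1` consecutive nonempty subpaths whose cut points are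
exactly the vertices of `X`. -/
def GeneratesPartition {n : ℕ} (X : Finset (Fin n)) (p : List (NBPEdge Var n))
    (parts : List (List (NBPEdge Var n))) : Prop :=
  p = parts.flatten ∧ parts.length = X.card + 1 ∧ (∀ q ∈ parts, q ≠ []) ∧
    (parts.dropLast.filterMap (fun q => q.getLast?.map NBPEdge.dst)).toFinset = X

/-- Variables of `Y₁` occur only on parts with even (0-based) index, i.e. odd-numbered
subpaths, and variables of `Y₂` only on parts with odd (0-based) index. -/
def OddEvenSplit [DecidableEq Var] {n : ℕ} (parts : List (List (NBPEdge Var n)))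
    (Y₁ Y₂ : Finset Var) : Prop :=
  ∀ k : ℕ, ∀ x ∈ pathVars (parts.getD k []),
    (x ∈ Y₁ → k % 2 = 0) ∧ (x ∈ Y₂ → k % 2 = 1)

/-- The set `X` of vertices of `Z` (containing neither source nor sink) separates the two
disjoint subsets `Y₁, Y₂` of `Vars(Z)`. -/
def NBP.Separates [DecidableEq Var] (Z : NBP Var) (X : Finset (Fin Z.n))
    (Y₁ Y₂ : Finset Var) : Prop :=
  Disjoint Y₁ Y₂ ∧ Y₁ ⊆ Z.vars ∧ Y₂ ⊆ Z.vars ∧ Z.source ∉ X ∧ Z.sink ∉ X ∧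
  ∃ p parts, Z.IsCompPath p ∧ GeneratesPartition X p parts ∧
    (OddEvenSplit parts Y₁ Y₂ ∨ OddEvenSplit parts Y₂ Y₁)

/-! ### Rooted trees -/

/-- A finite rooted tree on (a subset of) the vertex type `V`, given by a parent
function together with a depth function certifying acyclicity. -/
structure RootedTree (V : Type) [DecidableEq V] where
  verts : Finset V
  root : V
  parent : V → V
  depth : V → ℕ
  root_mem : root ∈ verts
  parent_mem : ∀ v ∈ verts, v ≠ root → parent v ∈ verts
  depth_root : depth root = 0
  depth_parent : ∀ v ∈ verts, v ≠ root → depth v = depth (parent v) + 1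

namespace RootedTree

variable {V : Type} [DecidableEq V]

/-- The children of a vertex. -/
def children (T : RootedTree V) (u : V) : Finset V :=
  T.verts.filter (fun v => v ≠ T.root ∧ T.parent v = u)

/-- The leaves of the tree: vertices with no children. -/
def leaves (T : RootedTree V) : Finset V :=
  T.verts.filter (fun v => T.children v = ∅)

/-- The vertex set of the path from the root to `v` (i.e. `v` and all its ancestors). -/
def pathVerts (T : RootedTree V) (v : V) : Finset V :=
  (Finset.range (T.depth v + 1)).image (fun k => T.parent^[k] v)

/-- The height of the tree: the largest number of vertices on a root-leaf path. -/
def height (T : RootedTree V) : ℕ :=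
  (T.verts.sup T.depth) + 1

/-- Every vertex has at most two children. -/
def IsBinary (T : RootedTree V) : Prop :=
  ∀ u ∈ T.verts, (T.children u).card ≤ 2

/-- The tree is extended: none of its leaves has a sibling. -/
def IsExtended (T : RootedTree V) : Prop :=
  ∀ v ∈ T.verts, v ≠ T.root → T.children v = ∅ → T.children (T.parent v) = {v}

/-- The edge set of the tree (as unordered pairs). -/
def edgeSet (T : RootedTree V) : Finset (Sym2 V) :=
  (T.verts.filter (fun v => v ≠ T.root)).image (fun v => s(v, T.parent v))

end RootedTree

/-! ### Binary-tree-based graphs and pseudoexpanders -/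

/-- A binary-tree-based (BTB) graph on the vertex type `V`: an edge-disjoint union of
`m` extended binary rooted trees such that every leaf of one of the trees is a leaf of
exactly two of the trees, any two trees have at most one vertex in common (that vertex
being a leaf of both), and the roots are pairwise distinct. -/
structure BTB (V : Type) [DecidableEq V] [Fintype V] where
  m : ℕ
  tree : Fin m → RootedTree V
  binary : ∀ i, (tree i).IsBinary
  extended : ∀ i, (tree i).IsExtended
  cover : ∀ v : V, ∃ i, v ∈ (tree i).verts
  edge_disjoint : ∀ i j, i ≠ j → Disjoint ((tree i).edgeSet) ((tree j).edgeSet)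
  leaf_two : ∀ i, ∀ v ∈ (tree i).leaves,
    (Finset.univ.filter (fun j => v ∈ (tree j).leaves)).card = 2
  common_le_one : ∀ i j, i ≠ j → ∀ u v,
    u ∈ (tree i).verts → u ∈ (tree j).verts →
    v ∈ (tree i).verts → v ∈ (tree j).verts → u = v
  common_leaf : ∀ i j, i ≠ j → ∀ v, v ∈ (tree i).verts → v ∈ (tree j).verts →
    v ∈ (tree i).leaves ∧ v ∈ (tree j).leaves
  roots_inj : Function.Injective (fun i => (tree i).root)

namespace BTB

variable {V : Type} [DecidableEq V] [Fintype V]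

/-- `ℓ` is the common leaf of the (adjacent) trees `T_i` and `T_j`. -/
def IsCommonLeaf (H : BTB V) (i j : Fin H.m) (ℓ : V) : Prop :=
  i ≠ j ∧ ℓ ∈ (H.tree i).leaves ∧ ℓ ∈ (H.tree j).leaves

/-- The trees `T_i` and `T_j` are adjacent (share a common leaf); equivalently,
`{t_i, t_j}` is a pseudoedge of `H`. -/
def Adjacent (H : BTB V) (i j : Fin H.m) : Prop :=
  ∃ ℓ, H.IsCommonLeaf i j ℓ

/-- The pseudodegree of the root `t_i`: the number of pseudoedges containing it. -/
noncomputable def pseudodegree (H : BTB V) (i : Fin H.m) : ℕ :=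
  (Finset.univ.filter (fun j => H.Adjacent i j)).card

/-- The set of root vertices of `H`. -/
def rootSet (H : BTB V) : Finset V :=
  Finset.univ.image (fun i => (H.tree i).root)

/-- A pseudomatching: a set of pseudoedges (recorded as ordered pairs of root indices
with `i < j`) no two of which share an end. -/
def IsPseudomatching (H : BTB V) (M : Finset (Fin H.m × Fin H.m)) : Prop :=
  (∀ e ∈ M, e.1 < e.2 ∧ H.Adjacent e.1 e.2) ∧
  ∀ e ∈ M, ∀ f ∈ M, e ≠ f → e.1 ≠ f.1 ∧ e.1 ≠ f.2 ∧ e.2 ≠ f.1 ∧ e.2 ≠ f.2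

/-- A pseudomatching between the disjoint sets `U` and `W` of roots (given by their
indices): every pseudoedge of `M` has one end in `U` and the other in `W`. -/
def IsPseudomatchingBetween (H : BTB V) (M : Finset (Fin H.m × Fin H.m))
    (U W : Finset (Fin H.m)) : Prop :=
  H.IsPseudomatching M ∧ ∀ e ∈ M, (e.1 ∈ U ∧ e.2 ∈ W) ∨ (e.1 ∈ W ∧ e.2 ∈ U)

/-- The set `⋃M` of root vertices matched by the pseudomatching `M`. -/
def matchingRoots (H : BTB V) (M : Finset (Fin H.m × Fin H.m)) : Finset V :=
  M.biUnion (fun e => {(H.tree e.1).root, (H.tree e.2).root})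

/-- The vertex set `V(P_{i,j})` of the path connecting the roots `t_i` and `t_j`
through their common leaf `ℓ`. -/
def clauseVerts (H : BTB V) (i j : Fin H.m) (ℓ : V) : Finset V :=
  (H.tree i).pathVerts ℓ ∪ (H.tree j).pathVerts ℓ

/-- `S` satisfies the monotone CNF `φ_H`. -/
def SatisfiesPhi (H : BTB V) (S : Finset (V × Bool)) : Prop :=
  ∀ i j ℓ, H.IsCommonLeaf i j ℓ → ∃ v ∈ H.clauseVerts i j ℓ, (v, true) ∈ S

/-- `S` falsifies no clause of `φ_H`. -/
def FalsifiesNoClause (H : BTB V) (S : Finset (V × Bool)) : Prop :=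
  ∀ i j ℓ, H.IsCommonLeaf i j ℓ → ¬(∀ v ∈ H.clauseVerts i j ℓ, (v, false) ∈ S)

/-- `H` is a pseudoexpander. -/
def IsPseudoexpander (H : BTB V) : Prop :=
  (∀ i, ((H.tree i).height : ℝ) ≤ Real.logb 2 H.m / 4.9 + 3) ∧
  ∀ U W : Finset (Fin H.m), Disjoint U W →
    (H.m : ℝ) ^ (0.999 : ℝ) ≤ U.card → (H.m : ℝ) ^ (0.999 : ℝ) ≤ W.card →
    ∃ M, H.IsPseudomatchingBetween M U W ∧ (H.m : ℝ) ^ (0.999 : ℝ) / 3 ≤ M.card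

/-! #### The probability space on the satisfying assignments of `φ_H` -/

/-- The set `SAT(H)` of satisfying assignments of `φ_H` (total assignments of the
variables `V(H)` satisfying every clause). -/
noncomputable def SATH (H : BTB V) : Finset (Finset (V × Bool)) :=
  Finset.univ.filter (fun S => AssignsExactly Finset.univ S ∧ H.SatisfiesPhi S)

/-- `Fix(S)`: the set of leaf variables `ℓ_{i,j}` occurring positively in `S` such that
all the other variables of the clause `C_{i,j}` occur negatively in `S`. -/
def Fix (H : BTB V) (S : Finset (V × Bool)) : Set V :=
  {ℓ | ∃ i j, H.IsCommonLeaf i j ℓ ∧ (ℓ, true) ∈ S ∧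
      ∀ v ∈ H.clauseVerts i j ℓ, v ≠ ℓ → (v, false) ∈ S}

/-- The probability weight of `S`: `(1/2) ^ |V(H) \ Fix(S)|`. -/
noncomputable def weight (H : BTB V) (S : Finset (V × Bool)) : ℝ :=
  (1 / 2 : ℝ) ^ (Fintype.card V - (H.Fix S).ncard)

/-- The probability of the event `E` in the probability space on `SAT(H)`. -/
noncomputable def Pr (H : BTB V) (E : Finset (V × Bool) → Prop) : ℝ :=
  ∑ S ∈ H.SATH.filter E, H.weight S

/-- `|S \ Fix(S)|`: the number of literals of `S` that are not fixed. -/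
noncomputable def nonFixedCount (H : BTB V) (S : Finset (V × Bool)) : ℕ :=
  (S.filter (fun l => ¬(l.2 = true ∧ l.1 ∈ H.Fix S))).card

/-- `v` and `w` are siblings (in one of the trees of `H`). -/
def Sibling (H : BTB V) (v w : V) : Prop :=
  ∃ k, v ∈ (H.tree k).verts ∧ w ∈ (H.tree k).verts ∧
    v ≠ (H.tree k).root ∧ w ≠ (H.tree k).root ∧ v ≠ w ∧
    (H.tree k).parent v = (H.tree k).parent w

/-- `S` respects the pseudoedge `{t_i, t_j}`: all non-root variables of `C_{i,j}` occur
negatively in `S` and the siblings of all internal variables of `C_{i,j}` occur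
positively in `S`. -/
def Respects (H : BTB V) (i j : Fin H.m) (S : Finset (V × Bool)) : Prop :=
  ∃ ℓ, H.IsCommonLeaf i j ℓ ∧
    (∀ v ∈ H.clauseVerts i j ℓ,
      v ≠ (H.tree i).root → v ≠ (H.tree j).root → (v, false) ∈ S) ∧
    (∀ v ∈ H.clauseVerts i j ℓ,
      v ≠ (H.tree i).root → v ≠ (H.tree j).root → v ≠ ℓ →
      ∀ w, H.Sibling v w → (w, true) ∈ S)

/-- `S` is `η`-comfortable w.r.t. the pseudomatching `M`: `S` falsifies no clause of
`φ_H` and respects at least `η·|M|` pseudoedges of `M`. -/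
noncomputable def Comfortable (H : BTB V) (M : Finset (Fin H.m × Fin H.m)) (η : ℝ)
    (S : Finset (V × Bool)) : Prop :=
  H.FalsifiesNoClause S ∧
    η * M.card ≤ ((M.filter (fun e => H.Respects e.1 e.2 S)).card : ℝ)

/-- `S` is a guarded set of literals. -/
def Guarded (H : BTB V) (S : Finset (V × Bool)) : Prop :=
  Consistent S ∧ ∀ i j ℓ, H.IsCommonLeaf i j ℓ →
    ((ℓ, true) ∉ S ∧ (ℓ, false) ∉ S) ∨
    (∃ v ∈ H.clauseVerts i j ℓ, v ≠ ℓ ∧ (v, true) ∈ S) ∨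
    ((ℓ, true) ∈ S ∧ ∀ v ∈ H.clauseVerts i j ℓ, v ≠ ℓ → (v, false) ∈ S)

/-! #### Matching CNFs and matching OR-CNFs -/

/-- The 'half clause' `C^{1/2}_{i,j}`: the positive clause on the vertices of the path
from `t_i` (if `side = true`) or from `t_j` (if `side = false`) to the common leaf `ℓ`. -/
def halfClause (H : BTB V) (i j : Fin H.m) (ℓ : V) (side : Bool) : Finset (V × Bool) :=
  (if side then (H.tree i).pathVerts ℓ else (H.tree j).pathVerts ℓ).image (fun v => (v, true))

/-- The matching CNF w.r.t. `M` determined by the side choice `c`: one half clause per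
pseudoedge of `M`.  The formulas of `CNF(M)` are exactly the CNFs `matchingCNF H M c`. -/
def matchingCNF (H : BTB V) (M : Finset (Fin H.m × Fin H.m))
    (c : Fin H.m × Fin H.m → Bool) : Set (Finset (V × Bool)) :=
  {C | ∃ e ∈ M, ∃ ℓ, H.IsCommonLeaf e.1 e.2 ℓ ∧ C = H.halfClause e.1 e.2 ℓ (c e)}

/-- A matching OR-CNF w.r.t. `M` is determined by a map `Ψ` assigning to each assignment
`S₀` of the variables `V(H) \ ⋃M` a matching CNF (given by its side choice `Ψ S₀`);
the formula is `⋁_{S₀} (Conj(S₀) ∧ matchingCNF H M (Ψ S₀))`.  `S` satisfies it iff for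
(the) `S₀ ⊆ S`, `S` satisfies the corresponding matching CNF. -/
def SatORCNF (H : BTB V) (M : Finset (Fin H.m × Fin H.m))
    (Ψ : Finset (V × Bool) → (Fin H.m × Fin H.m) → Bool) (S : Finset (V × Bool)) : Prop :=
  ∃ S₀, AssignsExactly (Finset.univ \ H.matchingRoots M) S₀ ∧ S₀ ⊆ S ∧
    SatCNF (H.matchingCNF M (Ψ S₀)) S

/-- `X` is an `(a, b)`-determining set for the NBP `Z` computing `φ_H`. -/
def IsDeterminingSet (H : BTB V) (Z : NBP V) (a b : ℝ) (X : Finset (Fin Z.n)) : Prop :=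
  (X.card : ℝ) ≤ a ∧
  ∃ M : Finset (Fin H.m × Fin H.m), H.IsPseudomatching M ∧ b ≤ (M.card : ℝ) ∧
    ∃ Ψ : Finset (V × Bool) → (Fin H.m × Fin H.m) → Bool,
      ∀ p, Z.IsCompPath p → X ⊆ pathVertices p → H.SatORCNF M Ψ (pathLits p)

end BTB

/-!
The vertices of `Z` are numbered in topological order, so the vertices of `X` occur in the same
order on every path through them, and the segment of an edge `e` (the number of vertices of `X`
at or before `e.src`) does not depend on the path. By uniformity, exchanging one segment of a
path through `X` for another one keeps the total number of occurrences of each variable, so every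
variable occurs the same number of times in a given segment on all source-sink paths through `X`.
On the separating path, say, `Y₁` occurs only in even and `Y₂` only in odd segments; hence the same
holds on `Q'` and `Q''`. The path following `Q'` on even and `Q''` on odd segments therefore
reads `Y₁` as `Q'` does, `Y₂` as `Q''` does, and every other variable as `S` does.
-/

namespace NBPEdge

variable {n : ℕ}

def var (e : NBPEdge Var n) : Option Var := e.lab.map Prod.fst

theorem var_eq_some {e : NBPEdge Var n} {x : Var} : e.var = some x ↔ ∃ b, e.lab = some (x, b) := by
  simp [var, Option.map_eq_some_iff]

end NBPEdge

theorem _root_.List.mem_flatten_iff_exists_mem_getD {α : Type*} {a : α} {L : List (List α)} :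
    a ∈ L.flatten ↔ ∃ k, a ∈ L.getD k [] := by
  rw [List.mem_flatten]
  constructor
  · rintro ⟨l, hl, ha⟩
    obtain ⟨k, hk, rfl⟩ := List.mem_iff_getElem.mp hl
    exact ⟨k, by rwa [List.getD_eq_getElem _ _ hk]⟩
  · rintro ⟨k, hk⟩
    by_cases h : k < L.length
    · exact ⟨L[k], List.getElem_mem h, by rwa [List.getD_eq_getElem _ _ h] at hk⟩
    · rw [List.getD_eq_default _ _ (not_lt.mp h)] at hk
      exact absurd hk List.not_mem_nil

theorem mem_pathVertices {n : ℕ} {p : List (NBPEdge Var n)} {t : Fin n} :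
    t ∈ pathVertices p ↔ ∃ e ∈ p, e.src = t ∨ e.dst = t := by
  simp only [pathVertices, Finset.mem_union, List.mem_toFinset, List.mem_map]
  grind

theorem pathVertices_append {n : ℕ} (a b : List (NBPEdge Var n)) :
    pathVertices (a ++ b) = pathVertices a ∪ pathVertices b := by
  ext t
  simp only [mem_pathVertices, Finset.mem_union, List.mem_append]
  grind

namespace NBP

variable {Z : NBP Var} {u v w : Fin Z.n} {a b p : List (NBPEdge Var Z.n)}

theorem IsPathFrom.singleton {e : NBPEdge Var Z.n} (he : e ∈ Z.edges) :
    Z.IsPathFrom e.src e.dst [e] :=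
  ⟨by simp, by simpa using he, List.isChain_singleton e, by simp, by simp⟩

theorem IsPathFrom.append (ha : Z.IsPathFrom u v a) (hb : Z.IsPathFrom v w b) :
    Z.IsPathFrom u w (a ++ b) := by
  obtain ⟨ha, hma, hca, hha, hla⟩ := ha
  obtain ⟨hb, hmb, hcb, hhb, hlb⟩ := hb
  refine ⟨by simp [ha], by grind, List.isChain_append.mpr ⟨hca, hcb, fun x hx y hy => ?_⟩,
    by rwa [List.head?_append_of_ne_nil _ ha], by rwa [List.getLast?_append_of_ne_nil _ hb]⟩
  rw [Option.mem_def.mp hx, Option.map_some, Option.some_inj] at hla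
  rw [Option.mem_def.mp hy, Option.map_some, Option.some_inj] at hhb
  rw [hla, hhb]

theorem IsPathFrom.src_eq {e : NBPEdge Var Z.n} (h : Z.IsPathFrom u w (e :: p)) : e.src = u := by
  simpa using h.2.2.2.1

theorem IsPathFrom.dst_getLast (h : Z.IsPathFrom u w p) (hp : p ≠ []) :
    (p.getLast hp).dst = w := by
  simpa [List.getLast?_eq_some_getLast hp] using h.2.2.2.2

theorem IsPathFrom.right_mem_pathVertices (h : Z.IsPathFrom u w p) : w ∈ pathVertices p :=
  mem_pathVertices.mpr ⟨p.getLast h.1, List.getLast_mem h.1, Or.inr (h.dst_getLast h.1)⟩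

theorem IsPathFrom.exists_of_append (h : Z.IsPathFrom u w (a ++ b)) (ha : a ≠ []) (hb : b ≠ []) :
    Z.IsPathFrom u (a.getLast ha).dst a ∧ Z.IsPathFrom (a.getLast ha).dst w b := by
  obtain ⟨-, hm, hc, hh, hl⟩ := h
  obtain ⟨hca, hcb, hab⟩ := List.isChain_append.mp hc
  obtain ⟨f, b, rfl⟩ := List.ne_nil_iff_exists_cons.mp hb
  refine ⟨⟨ha, by grind, hca, ?_, ?_⟩, ⟨hb, by grind, hcb, ?_, ?_⟩⟩
  · rwa [List.head?_append_of_ne_nil _ ha] at hh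
  · simp [List.getLast?_eq_some_getLast ha]
  · simp [hab _ (List.getLast?_eq_some_getLast ha) f rfl]
  · rwa [List.getLast?_append_of_ne_nil _ hb] at hl

theorem IsPathFrom.bounds (h : Z.IsPathFrom u w p) : ∀ e ∈ p, u ≤ e.src ∧ e.dst ≤ w := by
  induction p generalizing u with
  | nil => simp
  | cons e t ih =>
    have hsrc := h.src_eq
    have hlt : e.src < e.dst := Z.acyc e (h.2.1 e List.mem_cons_self)
    rcases eq_or_ne t [] with rfl | ht
    · simpa [← hsrc] using (h.dst_getLast (List.cons_ne_nil e [])).le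
    obtain ⟨f, hf⟩ := List.exists_mem_of_ne_nil t ht
    obtain ⟨he, ht⟩ := IsPathFrom.exists_of_append (a := [e]) h (List.cons_ne_nil e []) ht
    simp only [List.getLast_singleton] at he ht
    have ih := ih ht
    intro g hg
    rcases List.mem_cons.mp hg with rfl | hg
    · exact ⟨hsrc.ge, (ih f hf).1.trans ((Z.acyc f (ht.2.1 f hf)).le.trans (ih f hf).2)⟩
    · exact ⟨hsrc ▸ hlt.le.trans (ih g hg).1, (ih g hg).2⟩

theorem IsPathFrom.bounds_of_mem_pathVertices (h : Z.IsPathFrom u w p) {t : Fin Z.n}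
    (ht : t ∈ pathVertices p) : u ≤ t ∧ t ≤ w := by
  obtain ⟨e, he, rfl | rfl⟩ := mem_pathVertices.mp ht
  · exact ⟨(h.bounds e he).1, (Z.acyc e (h.2.1 e he)).le.trans (h.bounds e he).2⟩
  · exact ⟨(h.bounds e he).1.trans (Z.acyc e (h.2.1 e he)).le, (h.bounds e he).2⟩

theorem IsPathFrom.exists_mem_dst_eq (h : Z.IsPathFrom u w p) (hv : v ∈ pathVertices p)
    (hvu : v ≠ u) : ∃ e ∈ p, e.dst = v := by
  obtain ⟨e, he, hsrc | hdst⟩ := mem_pathVertices.mp hv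
  · obtain ⟨s, t, rfl⟩ := List.mem_iff_append.mp he
    rcases eq_or_ne s [] with rfl | hs
    · exact absurd (hsrc.symm.trans h.src_eq) hvu
    · have hst := (h.exists_of_append hs (List.cons_ne_nil e t)).2.src_eq
      exact ⟨s.getLast hs, by simp [List.getLast_mem], hsrc ▸ hst.symm⟩
  · exact ⟨e, he, hdst⟩

theorem IsPathFrom.exists_append_of_mem (h : Z.IsPathFrom u w p) (hv : v ∈ pathVertices p)
    (hvu : v ≠ u) (hvw : v ≠ w) :
    ∃ a b, p = a ++ b ∧ Z.IsPathFrom u v a ∧ Z.IsPathFrom v w b := by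
  obtain ⟨e, he, rfl⟩ := h.exists_mem_dst_eq hv hvu
  obtain ⟨s, t, rfl⟩ := List.mem_iff_append.mp he
  have ht : t ≠ [] := by
    rintro rfl
    exact hvw (by simpa using h.dst_getLast (by simp))
  have hsplit := IsPathFrom.exists_of_append (a := s ++ [e]) (by simpa using h) (by simp) ht
  simp only [List.getLast_append_singleton] at hsplit
  exact ⟨s ++ [e], t, by simp, hsplit⟩

theorem exists_isPathFrom_source_append {e : NBPEdge Var Z.n} (he : e ∈ Z.edges) :
    ∃ a, Z.IsPathFrom Z.source e.dst (a ++ [e]) := by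
  suffices ∀ v, ∀ e ∈ Z.edges, e.dst = v → ∃ a, Z.IsPathFrom Z.source e.dst (a ++ [e]) from
    this _ e he rfl
  intro v
  induction v using WellFoundedLT.induction with
  | _ v ih =>
    intro e he rfl
    by_cases hs : e.src = Z.source
    · exact ⟨[], hs ▸ IsPathFrom.singleton he⟩
    obtain ⟨f, hf, hfe⟩ := Z.only_source e.src hs
    obtain ⟨a, ha⟩ := ih f.dst (hfe ▸ Z.acyc e he) f hf rfl
    exact ⟨a ++ [f], by simpa using ha.append (hfe ▸ IsPathFrom.singleton he)⟩

theorem exists_isPathFrom_cons_sink {e : NBPEdge Var Z.n} (he : e ∈ Z.edges) :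
    ∃ b, Z.IsPathFrom e.src Z.sink (e :: b) := by
  suffices ∀ v, ∀ e ∈ Z.edges, e.src = v → ∃ b, Z.IsPathFrom e.src Z.sink (e :: b) from
    this _ e he rfl
  intro v
  induction v using WellFoundedGT.induction with
  | _ v ih =>
    intro e he rfl
    by_cases hs : e.dst = Z.sink
    · exact ⟨[], hs ▸ IsPathFrom.singleton he⟩
    obtain ⟨f, hf, hfe⟩ := Z.only_sink e.dst hs
    obtain ⟨b, hb⟩ := ih f.src (hfe ▸ Z.acyc e he) f hf rfl
    exact ⟨f :: b, by simpa using (hfe ▸ IsPathFrom.singleton he).append hb⟩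

theorem exists_isSourceSink_mem {e : NBPEdge Var Z.n} (he : e ∈ Z.edges) :
    ∃ p, Z.IsSourceSink p ∧ e ∈ p := by
  obtain ⟨a, ha⟩ := exists_isPathFrom_source_append he
  obtain ⟨b, hb⟩ := exists_isPathFrom_cons_sink he
  rcases eq_or_ne b [] with rfl | hb'
  · exact ⟨a ++ [e], by simpa [IsSourceSink, ← hb.dst_getLast (by simp)] using ha, by simp⟩
  · have hb := (IsPathFrom.exists_of_append (a := [e]) hb (by simp) hb').2
    exact ⟨a ++ [e] ++ b, ha.append hb, by simp⟩

end NBP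

theorem Consistent.eq_of_mem {S : Finset (Var × Bool)} (hS : Consistent S) {x : Var}
    {b₁ b₂ : Bool} (h₁ : (x, b₁) ∈ S) (h₂ : (x, b₂) ∈ S) : b₁ = b₂ := by
  cases b₁ <;> cases b₂
  · rfl
  · exact absurd ⟨h₂, h₁⟩ (hS x)
  · exact absurd ⟨h₁, h₂⟩ (hS x)
  · rfl

theorem Consistent.mem_of_assignsExactly {L S : Finset (Var × Bool)} {W : Finset Var}
    (hL : Consistent L) (hSL : S ⊆ L) (hS : AssignsExactly W S) {x : Var} (hx : x ∈ W)
    {c : Bool} (hxc : (x, c) ∈ L) : (x, c) ∈ S := by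
  obtain ⟨b, hb, -⟩ := hS.2 x hx
  rwa [hL.eq_of_mem hxc (hSL hb)]

section Occurrences

variable [DecidableEq Var] {n : ℕ}

theorem mem_pathLits {p : List (NBPEdge Var n)} {x : Var} {b : Bool} :
    (x, b) ∈ pathLits p ↔ ∃ e ∈ p, e.lab = some (x, b) := by
  simp [pathLits]

theorem mem_pathVars {p : List (NBPEdge Var n)} {x : Var} :
    x ∈ pathVars p ↔ ∃ e ∈ p, e.var = some x := by
  simp only [pathVars, List.mem_toFinset, List.mem_map, List.mem_filterMap, NBPEdge.var_eq_some]
  grind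

theorem occCount_eq_countP (x : Var) (p : List (NBPEdge Var n)) :
    occCount x p = p.countP (fun e => e.var = some x) := by
  rw [occCount, List.countP_filterMap]
  congr 1
  funext e
  rcases e with ⟨_, _, _ | ⟨y, b⟩, _⟩ <;> simp [NBPEdge.var]

theorem NBP.mem_vars {Z : NBP Var} {x : Var} : x ∈ Z.vars ↔ ∃ e ∈ Z.edges, e.var = some x := by
  simp [NBP.vars, NBPEdge.var]

theorem NBP.IsPathFrom.mem_vars_of_mem_pathLits {Z : NBP Var} {u w : Fin Z.n}
    {p : List (NBPEdge Var Z.n)} (hp : Z.IsPathFrom u w p) {x : Var} {c : Bool}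
    (hx : (x, c) ∈ pathLits p) : x ∈ Z.vars := by
  obtain ⟨e, he, hec⟩ := mem_pathLits.mp hx
  exact NBP.mem_vars.mpr ⟨e, hp.2.1 e he, NBPEdge.var_eq_some.mpr ⟨c, hec⟩⟩

theorem NBP.UniformReadTimes.exists_mem_pathLits {Z : NBP Var} {d : ℕ}
    (hZ : Z.UniformReadTimes d) {x : Var} (hx : x ∈ Z.vars) {p : List (NBPEdge Var Z.n)}
    (hp : Z.IsSourceSink p) : ∃ c, (x, c) ∈ pathLits p := by
  obtain ⟨e, he, hex⟩ := NBP.mem_vars.mp hx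
  obtain ⟨q, hq, heq⟩ := NBP.exists_isSourceSink_mem he
  have hpos : 0 < occCount x q := by
    rw [occCount_eq_countP]
    exact List.countP_pos_iff.mpr ⟨e, heq, by simpa using hex⟩
  rw [hZ.2 q hq x hx, ← hZ.2 p hp x hx, occCount_eq_countP, List.countP_pos_iff] at hpos
  obtain ⟨f, hf, hfx⟩ := hpos
  obtain ⟨c, hc⟩ := NBPEdge.var_eq_some.mp (by simpa using hfx)
  exact ⟨c, mem_pathLits.mpr ⟨f, hf, hc⟩⟩

end Occurrences

def segmentIndex {n : ℕ} (X : Finset (Fin n)) (e : NBPEdge Var n) : ℕ :=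
  (X.filter (· ≤ e.src)).card

namespace NBP

variable {Z : NBP Var} {u v w : Fin Z.n} {a b p : List (NBPEdge Var Z.n)}
  {X : Finset (Fin Z.n)} {e : NBPEdge Var Z.n}

theorem IsPathFrom.segmentIndex_eq_zero (ha : Z.IsPathFrom u v a) (hX : ∀ c ∈ X, v ≤ c)
    (he : e ∈ a) : segmentIndex X e = 0 := by
  have hlt : e.src < v := (Z.acyc e (ha.2.1 e he)).trans_le (ha.bounds e he).2
  simp only [segmentIndex, Finset.card_eq_zero, Finset.filter_eq_empty_iff, not_le]
  exact fun c hc => hlt.trans_le (hX c hc)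

theorem IsPathFrom.segmentIndex_insert (hb : Z.IsPathFrom v w b) (hv : v ∉ X) (he : e ∈ b) :
    segmentIndex (insert v X) e = segmentIndex X e + 1 := by
  rw [segmentIndex, Finset.filter_insert, if_pos (hb.bounds e he).1,
    Finset.card_insert_of_notMem (by simp [hv]), segmentIndex]

theorem IsPathFrom.exists_append_of_min (hp : Z.IsPathFrom u w p)
    (hX : insert v X ⊆ pathVertices p) (huv : u < v) (hvw : v < w) (hmin : ∀ c ∈ X, v < c) :
    ∃ a b, p = a ++ b ∧ Z.IsPathFrom u v a ∧ Z.IsPathFrom v w b ∧ X ⊆ pathVertices b := by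
  obtain ⟨a, b, rfl, ha, hb⟩ :=
    hp.exists_append_of_mem (hX (Finset.mem_insert_self v X)) huv.ne' hvw.ne
  refine ⟨a, b, rfl, ha, hb, fun c hc => ?_⟩
  have hc' := hX (Finset.mem_insert_of_mem hc)
  rw [pathVertices_append, Finset.mem_union] at hc'
  exact hc'.resolve_left fun hca => (hmin c hc).not_ge (ha.bounds_of_mem_pathVertices hca).2

theorem exists_isPathFrom_alternating (X : Finset (Fin Z.n)) {p q : List (NBPEdge Var Z.n)}
    (hp : Z.IsPathFrom u w p) (hq : Z.IsPathFrom u w q) (hXp : X ⊆ pathVertices p)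
    (hXq : X ⊆ pathVertices q) (hX : ∀ c ∈ X, u < c ∧ c < w) :
    ∃ r, Z.IsPathFrom u w r ∧ X ⊆ pathVertices r ∧
      ∀ e ∈ r, (e ∈ p ∧ Even (segmentIndex X e)) ∨ (e ∈ q ∧ Odd (segmentIndex X e)) := by
  induction X using Finset.induction_on_min generalizing u p q with
  | empty => exact ⟨p, hp, by simp, fun e he => Or.inl ⟨he, by simp [segmentIndex]⟩⟩
  | insert v X hmin ih =>
    obtain ⟨huv, hvw⟩ := hX v (Finset.mem_insert_self v X)
    obtain ⟨a, b, rfl, ha, hb, hXb⟩ := hp.exists_append_of_min hXp huv hvw hmin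
    obtain ⟨a', b', rfl, ha', hb', hXb'⟩ := hq.exists_append_of_min hXq huv hvw hmin
    obtain ⟨r, hr, hXr, hre⟩ :=
      ih hb' hb hXb' hXb fun c hc => ⟨hmin c hc, (hX c (by simp [hc])).2⟩
    refine ⟨a ++ r, ha.append hr, ?_, fun e he => ?_⟩
    · rw [pathVertices_append, Finset.insert_subset_iff]
      exact ⟨Finset.mem_union_left _ ha.right_mem_pathVertices,
        hXr.trans Finset.subset_union_right⟩
    rcases List.mem_append.mp he with he | he
    · have h0 := ha.segmentIndex_eq_zero (X := insert v X)
        (Finset.forall_mem_insert _ _ _ |>.mpr ⟨le_rfl, fun c hc => (hmin c hc).le⟩) he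
      exact Or.inl ⟨List.mem_append_left _ he, by simp [h0]⟩
    · simp only [hr.segmentIndex_insert (fun h => (hmin v h).false) he, Nat.even_add_one,
        Nat.odd_add_one, Nat.not_even_iff_odd, Nat.not_odd_iff_even]
      rcases hre e he with ⟨he', hev⟩ | ⟨he', hodd⟩
      exacts [Or.inr ⟨List.mem_append_right _ he', hev⟩,
        Or.inl ⟨List.mem_append_right _ he', hodd⟩]

theorem countP_append_segmentIndex_insert (ha : Z.IsPathFrom u v a) (hb : Z.IsPathFrom v w b)
    (hmin : ∀ c ∈ X, v < c) (φ : NBPEdge Var Z.n → Bool) (k : ℕ) :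
    (a ++ b).countP (fun e => φ e ∧ segmentIndex (insert v X) e = k) =
      a.countP (fun e => φ e ∧ 0 = k) + b.countP (fun e => φ e ∧ segmentIndex X e + 1 = k) := by
  have hle : ∀ c ∈ insert v X, v ≤ c :=
    Finset.forall_mem_insert _ _ _ |>.mpr ⟨le_rfl, fun c hc => (hmin c hc).le⟩
  rw [List.countP_append]
  congr 1
  · exact List.countP_congr fun e he => by simp [ha.segmentIndex_eq_zero hle he]
  · exact List.countP_congr fun e he => by
      simp [hb.segmentIndex_insert (fun h => (hmin v h).false) he]

theorem countP_segmentIndex_eq (X : Finset (Fin Z.n)) (φ : NBPEdge Var Z.n → Bool)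
    {p q : List (NBPEdge Var Z.n)} (hp : Z.IsPathFrom u w p) (hq : Z.IsPathFrom u w q)
    (hXp : X ⊆ pathVertices p) (hXq : X ⊆ pathVertices q) (hX : ∀ c ∈ X, u < c ∧ c < w)
    (hφ : ∀ r r', Z.IsPathFrom u w r → Z.IsPathFrom u w r' → r.countP φ = r'.countP φ)
    (k : ℕ) :
    p.countP (fun e => φ e ∧ segmentIndex X e = k) =
      q.countP (fun e => φ e ∧ segmentIndex X e = k) := by
  induction X using Finset.induction_on_min generalizing u p q k with
  | empty =>
    rcases k with _ | k
    · simpa [segmentIndex] using hφ p q hp hq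
    · simp [segmentIndex]
  | insert v X hmin ih =>
    obtain ⟨huv, hvw⟩ := hX v (Finset.mem_insert_self v X)
    obtain ⟨a, b, rfl, ha, hb, hXb⟩ := hp.exists_append_of_min hXp huv hvw hmin
    obtain ⟨a', b', rfl, ha', hb', hXb'⟩ := hq.exists_append_of_min hXq huv hvw hmin
    rw [countP_append_segmentIndex_insert ha hb hmin,
      countP_append_segmentIndex_insert ha' hb' hmin]
    rcases k with _ | k
    · have := hφ (a ++ b') (a' ++ b') (ha.append hb') (ha'.append hb')
      simp_all [List.countP_append]
    · have hφ' : ∀ r r', Z.IsPathFrom v w r → Z.IsPathFrom v w r' →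
          r.countP φ = r'.countP φ := fun r r' hr hr' => by
        simpa [List.countP_append] using hφ (a ++ r) (a ++ r') (ha.append hr) (ha.append hr')
      simpa using ih hb hb' hXb hXb' (fun c hc => ⟨hmin c hc, (hX c (by simp [hc])).2⟩) hφ' k

theorem exists_segmentIndex_eq_of_mem (X : Finset (Fin Z.n)) (φ : NBPEdge Var Z.n → Bool)
    {p q : List (NBPEdge Var Z.n)} (hp : Z.IsPathFrom u w p) (hq : Z.IsPathFrom u w q)
    (hXp : X ⊆ pathVertices p) (hXq : X ⊆ pathVertices q) (hX : ∀ c ∈ X, u < c ∧ c < w)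
    (hφ : ∀ r r', Z.IsPathFrom u w r → Z.IsPathFrom u w r' → r.countP φ = r'.countP φ)
    (he : e ∈ p) (hφe : φ e) :
    ∃ f ∈ q, φ f ∧ segmentIndex X f = segmentIndex X e := by
  have hpos : 0 < p.countP (fun f => φ f ∧ segmentIndex X f = segmentIndex X e) :=
    List.countP_pos_iff.mpr ⟨e, he, by simp [hφe]⟩
  rw [countP_segmentIndex_eq X φ hp hq hXp hXq hX hφ] at hpos
  simpa using List.countP_pos_iff.mp hpos

end NBP

def cutVertices {n : ℕ} (parts : List (List (NBPEdge Var n))) : Finset (Fin n) :=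
  (parts.dropLast.filterMap (fun q => q.getLast?.map NBPEdge.dst)).toFinset

section Partitions

variable {n : ℕ} {s : List (NBPEdge Var n)} {parts : List (List (NBPEdge Var n))}

theorem cutVertices_cons (hs : s ≠ []) (hparts : parts ≠ []) :
    cutVertices (s :: parts) = insert (s.getLast hs).dst (cutVertices parts) := by
  simp [cutVertices, List.dropLast_cons_of_ne_nil hparts, List.getLast?_eq_some_getLast hs]

theorem exists_mem_flatten_dst_eq_of_mem_cutVertices {c : Fin n} (hc : c ∈ cutVertices parts) :
    ∃ f ∈ parts.flatten, f.dst = c := by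
  simp only [cutVertices, List.mem_toFinset, List.mem_filterMap, Option.map_eq_some_iff] at hc
  obtain ⟨q, hq, f, hf, rfl⟩ := hc
  exact ⟨f, List.mem_flatten.mpr ⟨q, List.dropLast_subset _ hq, List.mem_of_getLast? hf⟩, rfl⟩

theorem cutVertices_subset_pathVertices : cutVertices parts ⊆ pathVertices parts.flatten :=
  fun c hc => by
    obtain ⟨f, hf, rfl⟩ := exists_mem_flatten_dst_eq_of_mem_cutVertices hc
    exact mem_pathVertices.mpr ⟨f, hf, Or.inr rfl⟩

end Partitions

theorem NBP.IsPathFrom.segmentIndex_cutVertices {Z : NBP Var} {u w : Fin Z.n}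
    {parts : List (List (NBPEdge Var Z.n))} (hp : Z.IsPathFrom u w parts.flatten)
    (hne : ∀ q ∈ parts, q ≠ []) :
    ∀ k, ∀ e ∈ parts.getD k [], segmentIndex (cutVertices parts) e = k := by
  induction parts generalizing u with
  | nil => simp
  | cons s parts ih =>
    have hs := hne s List.mem_cons_self
    rcases eq_or_ne parts [] with rfl | hparts
    · rintro (_ | k) e he
      · simp [cutVertices, segmentIndex]
      · simp at he
    have hflat : parts.flatten ≠ [] := by
      obtain ⟨q, hq⟩ := List.exists_mem_of_ne_nil parts hparts
      exact List.flatten_ne_nil_iff.mpr ⟨q, hq, hne q (List.mem_cons_of_mem s hq)⟩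
    obtain ⟨hsv, hv⟩ := IsPathFrom.exists_of_append (by simpa using hp) hs hflat
    have hmin : ∀ c ∈ cutVertices parts, (s.getLast hs).dst < c := fun c hc => by
      obtain ⟨f, hf, rfl⟩ := exists_mem_flatten_dst_eq_of_mem_cutVertices hc
      exact (hv.bounds f hf).1.trans_lt (Z.acyc f (hv.2.1 f hf))
    rw [cutVertices_cons hs hparts]
    rintro (_ | k) e he
    · exact hsv.segmentIndex_eq_zero (Finset.forall_mem_insert _ _ _ |>.mpr
        ⟨le_rfl, fun c hc => (hmin c hc).le⟩) (by simpa using he)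
    · have he : e ∈ parts.getD k [] := by simpa using he
      rw [hv.segmentIndex_insert (fun h => (hmin _ h).false)
          (List.mem_flatten_iff_exists_mem_getD.mpr ⟨k, he⟩),
        ih hv (fun q hq => hne q (List.mem_cons_of_mem s hq)) k e he]

theorem OddEvenSplit.even_segmentIndex [DecidableEq Var] {Z : NBP Var} {u w : Fin Z.n}
    {parts : List (List (NBPEdge Var Z.n))} {Y₁ Y₂ : Finset Var}
    (hsplit : OddEvenSplit parts Y₁ Y₂) (hp : Z.IsPathFrom u w parts.flatten)
    (hne : ∀ q ∈ parts, q ≠ []) {e : NBPEdge Var Z.n} (he : e ∈ parts.flatten) {x : Var}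
    (hx : e.var = some x) :
    (x ∈ Y₁ → Even (segmentIndex (cutVertices parts) e)) ∧
      (x ∈ Y₂ → Odd (segmentIndex (cutVertices parts) e)) := by
  obtain ⟨k, hk⟩ := List.mem_flatten_iff_exists_mem_getD.mp he
  rw [hp.segmentIndex_cutVertices hne k e hk, Nat.even_iff, Nat.odd_iff]
  exact hsplit k x (mem_pathVars.mpr ⟨e, hk, hx⟩)

def RoutedThrough {n : ℕ} (Y₁ Y₂ : Finset Var) (Q' Q'' R : List (NBPEdge Var n)) : Prop :=
  ∀ e ∈ R, (e ∈ Q' ∨ e ∈ Q'') ∧ ∀ x, e.var = some x → (x ∈ Y₁ → e ∈ Q') ∧ (x ∈ Y₂ → e ∈ Q'')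

theorem RoutedThrough.symm {n : ℕ} {Y₁ Y₂ : Finset Var} {Q' Q'' R : List (NBPEdge Var n)}
    (h : RoutedThrough Y₁ Y₂ Q' Q'' R) : RoutedThrough Y₂ Y₁ Q'' Q' R :=
  fun e he => ⟨(h e he).1.symm, fun x hx => ((h e he).2 x hx).symm⟩

section Routing

variable [DecidableEq Var] {Z : NBP Var} {X : Finset (Fin Z.n)} {Y₁ Y₂ : Finset Var}
  {Q' Q'' R : List (NBPEdge Var Z.n)} {d : ℕ}

theorem NBP.exists_routedThrough_of_oddEvenSplit (hZ : Z.UniformReadTimes d)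
    (hsrc : Z.source ∉ X) (hsink : Z.sink ∉ X) {P : List (NBPEdge Var Z.n)}
    {parts : List (List (NBPEdge Var Z.n))} (hP : Z.IsSourceSink P)
    (hgen : GeneratesPartition X P parts) (hsplit : OddEvenSplit parts Y₁ Y₂)
    (hQ' : Z.IsSourceSink Q') (hQ'' : Z.IsSourceSink Q'')
    (hX' : X ⊆ pathVertices Q') (hX'' : X ⊆ pathVertices Q'') :
    ∃ R, Z.IsSourceSink R ∧ X ⊆ pathVertices R ∧ RoutedThrough Y₁ Y₂ Q' Q'' R := by
  obtain ⟨rfl, -, hne, hcuts⟩ := hgen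
  replace hcuts : cutVertices parts = X := hcuts
  subst hcuts
  have hX : ∀ c ∈ cutVertices parts, Z.source < c ∧ c < Z.sink := fun c hc => by
    have := hQ'.bounds_of_mem_pathVertices (hX' hc)
    exact ⟨this.1.lt_of_ne (by rintro rfl; exact hsrc hc),
      this.2.lt_of_ne (by rintro rfl; exact hsink hc)⟩
  have hcount : ∀ x ∈ Z.vars, ∀ r r', Z.IsSourceSink r → Z.IsSourceSink r' →
      r.countP (fun e => e.var = some x) = r'.countP (fun e => e.var = some x) :=
    fun x hx r r' hr hr' => by
      rw [← occCount_eq_countP, ← occCount_eq_countP, hZ.2 r hr x hx, hZ.2 r' hr' x hx]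
  have hparity : ∀ Q, Z.IsSourceSink Q → cutVertices parts ⊆ pathVertices Q → ∀ e ∈ Q, ∀ x,
      e.var = some x → (x ∈ Y₁ → Even (segmentIndex (cutVertices parts) e)) ∧
        (x ∈ Y₂ → Odd (segmentIndex (cutVertices parts) e)) := fun Q hQ hXQ e he x hx => by
    obtain ⟨f, hf, hfx, hfe⟩ := NBP.exists_segmentIndex_eq_of_mem _ _ hQ hP hXQ
      cutVertices_subset_pathVertices hX (hcount x (NBP.mem_vars.mpr ⟨e, hQ.2.1 e he, hx⟩)) he
      (by simpa using hx)
    rw [← hfe]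
    exact hsplit.even_segmentIndex hP hne hf (by simpa using hfx)
  obtain ⟨R, hR, hXR, hRe⟩ := NBP.exists_isPathFrom_alternating _ hQ' hQ'' hX' hX'' hX
  refine ⟨R, hR, hXR, fun e he => ?_⟩
  rcases hRe e he with ⟨heQ, heven⟩ | ⟨heQ, hodd⟩
  · refine ⟨Or.inl heQ, fun x hx => ⟨fun _ => heQ, fun hx₂ => ?_⟩⟩
    exact absurd heven (Nat.not_even_iff_odd.mpr ((hparity Q' hQ' hX' e heQ x hx).2 hx₂))
  · refine ⟨Or.inr heQ, fun x hx => ⟨fun hx₁ => ?_, fun _ => heQ⟩⟩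
    exact absurd ((hparity Q'' hQ'' hX'' e heQ x hx).1 hx₁) (Nat.not_even_iff_odd.mpr hodd)

theorem NBP.Separates.exists_routedThrough (hsep : Z.Separates X Y₁ Y₂)
    (hZ : Z.UniformReadTimes d) (hQ' : Z.IsSourceSink Q') (hQ'' : Z.IsSourceSink Q'')
    (hX' : X ⊆ pathVertices Q') (hX'' : X ⊆ pathVertices Q'') :
    ∃ R, Z.IsSourceSink R ∧ X ⊆ pathVertices R ∧ RoutedThrough Y₁ Y₂ Q' Q'' R := by
  obtain ⟨-, -, -, hsrc, hsink, P, parts, hP, hgen, hsplit | hsplit⟩ := hsep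
  · exact NBP.exists_routedThrough_of_oddEvenSplit hZ hsrc hsink hP.1 hgen hsplit hQ' hQ'' hX' hX''
  · obtain ⟨R, hR, hXR, hRQ⟩ :=
      NBP.exists_routedThrough_of_oddEvenSplit hZ hsrc hsink hP.1 hgen hsplit hQ'' hQ' hX'' hX'
    exact ⟨R, hR, hXR, hRQ.symm⟩

variable {S : Finset (Var × Bool)} {x : Var} {c : Bool}

theorem RoutedThrough.mem_pathLits_or (h : RoutedThrough Y₁ Y₂ Q' Q'' R)
    (hxc : (x, c) ∈ pathLits R) : (x, c) ∈ pathLits Q' ∨ (x, c) ∈ pathLits Q'' := by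
  obtain ⟨e, he, hec⟩ := mem_pathLits.mp hxc
  exact (h e he).1.imp (fun h => mem_pathLits.mpr ⟨e, h, hec⟩)
    (fun h => mem_pathLits.mpr ⟨e, h, hec⟩)

theorem RoutedThrough.mem_pathLits_left (h : RoutedThrough Y₁ Y₂ Q' Q'' R) (hx : x ∈ Y₁)
    (hxc : (x, c) ∈ pathLits R) : (x, c) ∈ pathLits Q' := by
  obtain ⟨e, he, hec⟩ := mem_pathLits.mp hxc
  exact mem_pathLits.mpr ⟨e, ((h e he).2 x (NBPEdge.var_eq_some.mpr ⟨c, hec⟩)).1 hx, hec⟩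

theorem RoutedThrough.mem_of_mem_pathLits (h : RoutedThrough Y₁ Y₂ Q' Q'' R)
    (hR : Z.IsSourceSink R) (hQ' : Consistent (pathLits Q')) (hQ'' : Consistent (pathLits Q''))
    (hS : AssignsExactly (Z.vars \ (Y₁ ∪ Y₂)) S) (hS' : S ⊆ pathLits Q')
    (hS'' : S ⊆ pathLits Q'') (hx₁ : x ∉ Y₁) (hx₂ : x ∉ Y₂) (hxc : (x, c) ∈ pathLits R) :
    (x, c) ∈ S := by
  have hx : x ∈ Z.vars \ (Y₁ ∪ Y₂) := by simp [hR.mem_vars_of_mem_pathLits hxc, hx₁, hx₂]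
  exact (h.mem_pathLits_or hxc).elim (hQ'.mem_of_assignsExactly hS' hS hx)
    (hQ''.mem_of_assignsExactly hS'' hS hx)

theorem RoutedThrough.consistent (h : RoutedThrough Y₁ Y₂ Q' Q'' R) (hR : Z.IsSourceSink R)
    (hQ' : Consistent (pathLits Q')) (hQ'' : Consistent (pathLits Q''))
    (hS : AssignsExactly (Z.vars \ (Y₁ ∪ Y₂)) S) (hS' : S ⊆ pathLits Q')
    (hS'' : S ⊆ pathLits Q'') : Consistent (pathLits R) := by
  rintro x ⟨ht, hf⟩
  by_cases hx₁ : x ∈ Y₁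
  · exact hQ' x ⟨h.mem_pathLits_left hx₁ ht, h.mem_pathLits_left hx₁ hf⟩
  by_cases hx₂ : x ∈ Y₂
  · exact hQ'' x ⟨h.symm.mem_pathLits_left hx₂ ht, h.symm.mem_pathLits_left hx₂ hf⟩
  exact hQ' x ⟨hS' (h.mem_of_mem_pathLits hR hQ' hQ'' hS hS' hS'' hx₁ hx₂ ht),
    hS' (h.mem_of_mem_pathLits hR hQ' hQ'' hS hS' hS'' hx₁ hx₂ hf)⟩

theorem RoutedThrough.subset_pathLits (h : RoutedThrough Y₁ Y₂ Q' Q'' R)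
    (hZ : Z.UniformReadTimes d) (hR : Z.IsSourceSink R) (hQ' : Consistent (pathLits Q'))
    (hQ'' : Consistent (pathLits Q'')) (hS : AssignsExactly (Z.vars \ (Y₁ ∪ Y₂)) S)
    (hS' : S ⊆ pathLits Q') (hS'' : S ⊆ pathLits Q'') : S ⊆ pathLits R := by
  rintro ⟨x, b⟩ hxb
  obtain ⟨hxZ, hxY⟩ := Finset.mem_sdiff.mp (hS.1 _ hxb)
  obtain ⟨c, hc⟩ := hZ.exists_mem_pathLits hxZ hR
  have hcS := h.mem_of_mem_pathLits hR hQ' hQ'' hS hS' hS''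
    (fun h => hxY (by simp [h])) (fun h => hxY (by simp [h])) hc
  rwa [hQ'.eq_of_mem (hS' hcS) (hS' hxb)] at hc

theorem RoutedThrough.mem_pathLits_of_mem_left (h : RoutedThrough Y₁ Y₂ Q' Q'' R)
    (hZ : Z.UniformReadTimes d) (hR : Z.IsSourceSink R) (hQ' : Consistent (pathLits Q'))
    (hx : x ∈ Y₁) (hxZ : x ∈ Z.vars) (hxc : (x, c) ∈ pathLits Q') : (x, c) ∈ pathLits R := by
  obtain ⟨c', hc'⟩ := hZ.exists_mem_pathLits hxZ hR
  rwa [hQ'.eq_of_mem (h.mem_pathLits_left hx hc') hxc] at hc'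

end Routing

/-- combining two computational paths through a separating set `X` into
a single computational path assigning `Y₁' ∪ Y₂'` negatively. -/
theorem statement_15 (Var : Type) [DecidableEq Var] (Z : NBP Var) (d : ℕ)
    (hZ : Z.UniformReadTimes d) (X : Finset (Fin Z.n)) (Y₁ Y₂ : Finset Var)
    (hsep : Z.Separates X Y₁ Y₂)
    (Y₁' Y₂' : Finset Var) (h₁ : Y₁' ⊆ Y₁) (h₂ : Y₂' ⊆ Y₂)
    (S : Finset (Var × Bool)) (hS : AssignsExactly (Z.vars \ (Y₁ ∪ Y₂)) S)
    (Q' Q'' : List (NBPEdge Var Z.n))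
    (hQ' : Z.IsCompPath Q') (hQ'' : Z.IsCompPath Q'')
    (hX' : X ⊆ pathVertices Q') (hX'' : X ⊆ pathVertices Q'')
    (hS' : S ⊆ pathLits Q') (hS'' : S ⊆ pathLits Q'')
    (hneg' : ∀ x ∈ Y₁', (x, false) ∈ pathLits Q')
    (hneg'' : ∀ x ∈ Y₂', (x, false) ∈ pathLits Q'') :
    ∃ Q, Z.IsCompPath Q ∧ X ⊆ pathVertices Q ∧ S ⊆ pathLits Q ∧
      ∀ x ∈ Y₁' ∪ Y₂', (x, false) ∈ pathLits Q := by
  obtain ⟨R, hR, hXR, hRQ⟩ := hsep.exists_routedThrough hZ hQ'.1 hQ''.1 hX' hX''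
  refine ⟨R, ⟨hR, hRQ.consistent hR hQ'.2 hQ''.2 hS hS' hS''⟩, hXR,
    hRQ.subset_pathLits hZ hR hQ'.2 hQ''.2 hS hS' hS'', fun x hx => ?_⟩
  rcases Finset.mem_union.mp hx with hx | hx
  · exact hRQ.mem_pathLits_of_mem_left hZ hR hQ'.2 (h₁ hx) (hsep.2.1 (h₁ hx)) (hneg' x hx)
  · exact hRQ.symm.mem_pathLits_of_mem_left hZ hR hQ''.2 (h₂ hx) (hsep.2.2.1 (h₂ hx))
      (hneg'' x hx)

end NBPPaper
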